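/- Let Ψ be an instance of {1,2}-CSP whose constraint graph G is connected and bipartite, assume P_∞ ⊨ Ψ, and let f be the ≺-least variable. Then P_4 ⊨ Ψ if and only if there is no edge xy of G with β(x) = β(y) = 2, x ≠ f and y ≠ f (i.e. the ∃^{≥2} vertices of G are pairwise non-adjacent except possibly for edges incident to f). -/

import Mathlib

namespace CountingCSP

/-! ## The basic framework

An instance `Ψ` of `{1,2}`-CSP is modelled by a number `m` of variables, the variable set
being `Fin m` with its natural linear order `<` (the order of quantification `≺`), a function
`β : Fin m → ℕ` taking values in `{1,2}` (variable `v` is quantified by `∃^{≥ β v}`), and a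
simple graph `G` on `Fin m` (the constraint graph).  A target graph is a type `B` together
with an adjacency relation `E : B → B → Prop` (loops allowed in general). -/

/-- Adjacency of the finite path `P_n` on the vertices `{1,…,n}`, modelled as `Fin n`. -/
def pathAdj (n : ℕ) (i j : Fin n) : Prop :=
  (i : ℕ) + 1 = j ∨ (j : ℕ) + 1 = i

/-- Adjacency of the infinite path `P_∞` on `ℤ`: `i` and `j` adjacent iff `|i - j| = 1`. -/
def intPathAdj (i j : ℤ) : Prop := |i - j| = 1

/-- `SatFrom β G E i f` : processing the variables of the instance in `≺`-increasing order
starting from variable `i`, where the earlier variables have been assigned according to `f`,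
the instance can be satisfied.  At each variable `v` one asks for a set `S` of `β v` distinct
elements of the target such that for every `b ∈ S` the rest of the instance can be satisfied
with `v ↦ b`; when all variables are assigned, the assignment must be a homomorphism. -/
def SatFrom {m : ℕ} {B : Type*} (β : Fin m → ℕ) (G : SimpleGraph (Fin m))
    (E : B → B → Prop) (i : ℕ) (f : Fin m → B) : Prop :=
  if h : i < m then
    ∃ S : Finset B, S.card = β ⟨i, h⟩ ∧
      ∀ b ∈ S, SatFrom β G E (i + 1) (Function.update f ⟨i, h⟩ b)
  else ∀ u v : Fin m, G.Adj u v → E (f u) (f v)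
termination_by m - i
decreasing_by omega

/-- `Sat β G E` : the instance with quantifiers `β` and constraint graph `G` is satisfied by
the target graph with adjacency `E`  (i.e. `H ⊨ Ψ`).  The initial assignment is irrelevant
since every variable is assigned before it is used. -/
def Sat {m : ℕ} {B : Type*} (β : Fin m → ℕ) (G : SimpleGraph (Fin m))
    (E : B → B → Prop) : Prop :=
  ∀ f : Fin m → B, SatFrom β G E 0 f

/-- A graph is bipartite iff it has a proper 2-colouring. -/
def Bipartite {V : Type*} (G : SimpleGraph V) : Prop :=
  ∃ c : V → Bool, ∀ u v, G.Adj u v → c u ≠ c v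

/-! ## Walks, looping walks, and the distance function δ -/

/-- `λ(Q) = |Q| − 2·∑_{interior vertices x of Q} (β x − 1)`, where `|Q|` is the length
(number of edges) of the walk `Q = x₁,…,x_r`, and the interior vertices are `x₂,…,x_{r−1}`. -/
def lamWalk {m : ℕ} (β : Fin m → ℕ) (Q : List (Fin m)) : ℤ :=
  ((Q.length : ℤ) - 1) - 2 * (((Q.drop 1).dropLast).map (fun x => (β x : ℤ) - 1)).sum

/-- Looping walks of `G` (with respect to the quantification order `<` on `Fin m`):
a walk `x₁,…,x_r` with `x₁ ≠ x_r` such that if `r ≥ 3` then both endpoints strictly precede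
every interior vertex and the walk splits at some interior position into two looping walks. -/
inductive IsLoopingWalk {m : ℕ} (G : SimpleGraph (Fin m)) : List (Fin m) → Prop
  | base {x y : Fin m} : G.Adj x y → IsLoopingWalk G [x, y]
  | comb {x y z : Fin m} {Q₁ Q₂ : List (Fin m)} :
      IsLoopingWalk G (x :: (Q₁ ++ [y])) →
      IsLoopingWalk G (y :: (Q₂ ++ [z])) →
      x ≠ z →
      (∀ w ∈ Q₁ ++ y :: Q₂, x < w ∧ z < w) →
      IsLoopingWalk G (x :: (Q₁ ++ y :: Q₂ ++ [z]))

/-- `Q` is a looping walk between `u` and `v` (in either direction). -/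
def LoopingWalkBetween {m : ℕ} (G : SimpleGraph (Fin m)) (u v : Fin m)
    (Q : List (Fin m)) : Prop :=
  IsLoopingWalk G Q ∧
    ((Q.head? = some u ∧ Q.getLast? = some v) ∨ (Q.head? = some v ∧ Q.getLast? = some u))

/-- `IsDelta G β u v d` : `d = δ(u,v)`, i.e. `d` is the minimum of `λ(Q)` over all looping
walks `Q` of `G` between `u` and `v`.  (`δ(u,v) < ∞` corresponds to `∃ d, IsDelta G β u v d`.) -/
def IsDelta {m : ℕ} (G : SimpleGraph (Fin m)) (β : Fin m → ℕ) (u v : Fin m) (d : ℤ) : Prop :=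
  (∃ Q, LoopingWalkBetween G u v Q ∧ lamWalk β Q = d) ∧
    ∀ Q, LoopingWalkBetween G u v Q → d ≤ lamWalk β Q

/-! ## The functions γ and γ′ -/

/-- `IsGammaVal G β g v t` : `t = max(0, max_{u ≺ v, δ(u,v) < ∞} (g u − δ(u,v) + β v − 1))`. -/
def IsGammaVal {m : ℕ} (G : SimpleGraph (Fin m)) (β : Fin m → ℕ) (g : Fin m → ℤ)
    (v : Fin m) (t : ℤ) : Prop :=
  0 ≤ t ∧
  (∀ u, u < v → ∀ d, IsDelta G β u v d → g u - d + (β v : ℤ) - 1 ≤ t) ∧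
  (t = 0 ∨ ∃ u, u < v ∧ ∃ d, IsDelta G β u v d ∧ t = g u - d + (β v : ℤ) - 1)

/-- `g` is the function `γ`: `γ(v) = 0` for the `≺`-least vertex, and otherwise
`γ(v) = β(v) − 1 + max(0, max_{u ≺ v, δ(u,v) < ∞} (γ(u) − δ(u,v) + β(v) − 1))`. -/
def IsGamma {m : ℕ} (G : SimpleGraph (Fin m)) (β : Fin m → ℕ) (g : Fin m → ℤ) : Prop :=
  ∀ v : Fin m,
    if (v : ℕ) = 0 then g v = 0
    else ∃ t, IsGammaVal G β g v t ∧ g v = (β v : ℤ) - 1 + t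

/-- `g` is the function `γ′`:
`γ′(v) = β(v) − 1 + max(0, max_{u ≺ v, δ(u,v) < ∞} (γ′(u) − δ(u,v) + β(v) − 1))`
(so `γ′(v) = β(v) − 1` for the `≺`-least vertex). -/
def IsGamma' {m : ℕ} (G : SimpleGraph (Fin m)) (β : Fin m → ℕ) (g : Fin m → ℤ) : Prop :=
  ∀ v : Fin m, ∃ t, IsGammaVal G β g v t ∧ g v = (β v : ℤ) - 1 + t

/-! ## The closure sets (F, R⁺, R⁻) for the {2}-CSP(K₄) algorithm -/

mutual
/-- Membership in the closure set `F` of pairs (initialised as the edge set of `G`). -/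
inductive InF {m : ℕ} (G : SimpleGraph (Fin m)) : Finset (Fin m) → Prop
  | edge {x y : Fin m} : G.Adj x y → InF G {x, y}
  | x3a {x y w z : Fin m} : [x, y, w, z].Pairwise (· ≠ ·) →
      x < z → y < z → w < z → ¬(x < w ∧ y < w) →
      InF G {w, z} → InRp G {x, y, z} → InF G {x, w}
  | x3b {x y w z : Fin m} : [x, y, w, z].Pairwise (· ≠ ·) →
      x < z → y < z → w < z → ¬(x < w ∧ y < w) →
      InF G {w, z} → InRp G {x, y, z} → InF G {y, w}
  | x4 {x y w z : Fin m} : [x, y, w, z].Pairwise (· ≠ ·) →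
      x < y → w < y → y < z →
      InRp G {x, y, z} → InRm G {w, y, z} → InF G {x, w}
  | x7a {x y q w z : Fin m} : [x, y, q, w, z].Pairwise (· ≠ ·) →
      x < q → y < q → w < q → q < z → ¬(x < w ∧ y < w) →
      InRp G {x, y, z} → InRm G {w, q, z} → InF G {x, w}
  | x7a' {x y q w z : Fin m} : [x, y, q, w, z].Pairwise (· ≠ ·) →
      x < q → y < q → w < q → q < z → ¬(x < w ∧ y < w) →
      InRm G {x, y, z} → InRp G {w, q, z} → InF G {x, w}
  | x7b {x y q w z : Fin m} : [x, y, q, w, z].Pairwise (· ≠ ·) →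
      x < q → y < q → w < q → q < z → ¬(x < w ∧ y < w) →
      InRp G {x, y, z} → InRm G {w, q, z} → InF G {y, w}
  | x7b' {x y q w z : Fin m} : [x, y, q, w, z].Pairwise (· ≠ ·) →
      x < q → y < q → w < q → q < z → ¬(x < w ∧ y < w) →
      InRm G {x, y, z} → InRp G {w, q, z} → InF G {y, w}

/-- Membership in the closure set `R⁺` of triples. -/
inductive InRp {m : ℕ} (G : SimpleGraph (Fin m)) : Finset (Fin m) → Prop
  | x2 {x y w z : Fin m} : [x, y, w, z].Pairwise (· ≠ ·) →
      x < z → y < z → w < z →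
      InF G {w, z} → InRm G {x, y, z} → InRp G {x, y, w}
  | x4 {x y w z : Fin m} : [x, y, w, z].Pairwise (· ≠ ·) →
      x < y → w < y → y < z →
      InRp G {x, y, z} → InRm G {w, y, z} → InRp G {x, y, w}
  | x5p {x y w z : Fin m} : [x, y, w, z].Pairwise (· ≠ ·) →
      x < z → y < z → w < z →
      InRp G {x, y, z} → InRp G {w, y, z} → InRp G {x, y, w}
  | x5m {x y w z : Fin m} : [x, y, w, z].Pairwise (· ≠ ·) →
      x < z → y < z → w < z →
      InRm G {x, y, z} → InRm G {w, y, z} → InRp G {x, y, w}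
  | x6ap {x y q w z : Fin m} : [x, y, q, w, z].Pairwise (· ≠ ·) →
      x < q → y < q → w < q → q < z →
      InRp G {x, y, z} → InRp G {w, q, z} → InRp G {x, y, w}
  | x6am {x y q w z : Fin m} : [x, y, q, w, z].Pairwise (· ≠ ·) →
      x < q → y < q → w < q → q < z →
      InRm G {x, y, z} → InRm G {w, q, z} → InRp G {x, y, w}
  | x6bp {x y q w z : Fin m} : [x, y, q, w, z].Pairwise (· ≠ ·) →
      x < q → y < q → w < q → q < z →
      InRp G {x, y, z} → InRp G {w, q, z} → InRp G {x, y, q}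
  | x6bm {x y q w z : Fin m} : [x, y, q, w, z].Pairwise (· ≠ ·) →
      x < q → y < q → w < q → q < z →
      InRm G {x, y, z} → InRm G {w, q, z} → InRp G {x, y, q}

/-- Membership in the closure set `R⁻` of triples. -/
inductive InRm {m : ℕ} (G : SimpleGraph (Fin m)) : Finset (Fin m) → Prop
  | x1 {x y z : Fin m} : [x, y, z].Pairwise (· ≠ ·) →
      x < z → y < z →
      InF G {x, z} → InF G {y, z} → InRm G {x, y, z}
  | x3 {x y w z : Fin m} : [x, y, w, z].Pairwise (· ≠ ·) →
      x < z → y < z → w < z → x < w → y < w →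
      InF G {w, z} → InRp G {x, y, z} → InRm G {x, y, w}
  | x7a {x y q w z : Fin m} : [x, y, q, w, z].Pairwise (· ≠ ·) →
      x < q → y < q → w < q → q < z →
      InRp G {x, y, z} → InRm G {w, q, z} → InRm G {x, y, q}
  | x7a' {x y q w z : Fin m} : [x, y, q, w, z].Pairwise (· ≠ ·) →
      x < q → y < q → w < q → q < z →
      InRm G {x, y, z} → InRp G {w, q, z} → InRm G {x, y, q}
  | x7b {x y q w z : Fin m} : [x, y, q, w, z].Pairwise (· ≠ ·) →
      x < q → y < q → w < q → q < z → x < w → y < w →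
      InRp G {x, y, z} → InRm G {w, q, z} → InRm G {x, y, w}
  | x7b' {x y q w z : Fin m} : [x, y, q, w, z].Pairwise (· ≠ ·) →
      x < q → y < q → w < q → q < z → x < w → y < w →
      InRm G {x, y, z} → InRp G {w, q, z} → InRm G {x, y, w}
end

/-!
If `x ≺ y` are adjacent `∃^{≥2}` variables, both after the first variable `f`, then once `f`
has been played the two values chosen at `x` have the same parity: `G` is connected and
bipartite and every edge of `P_4` changes parity. Each of them also needs two distinct
neighbours (the two values chosen at `y`), so both are inner vertices `1`, `2` of `P_4`, which
have different parities.

Conversely, once `f` takes a value `b ∈ {1, 2}`, a greedy assignment wins: a variable in the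
colour class of `f` gets values of the parity of `b`, the others the opposite parity, namely the
inner vertex of that parity, or both vertices of that parity for an `∃^{≥2}` variable other
than `f`. No edge joins two variables of the second kind, so every edge goes to an edge.
-/

section Framework

variable {m : ℕ} {B : Type*} {β : Fin m → ℕ} {G : SimpleGraph (Fin m)} {E : B → B → Prop}

def IsHom (G : SimpleGraph (Fin m)) (E : B → B → Prop) (g : Fin m → B) : Prop :=
  ∀ u v, G.Adj u v → E (g u) (g v)

theorem satFrom_iff_of_lt {i : ℕ} {f : Fin m → B} (h : i < m) :
    SatFrom β G E i f ↔ ∃ S : Finset B, S.card = β ⟨i, h⟩ ∧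
      ∀ b ∈ S, SatFrom β G E (i + 1) (Function.update f ⟨i, h⟩ b) := by
  rw [SatFrom, dif_pos h]

theorem satFrom_iff_of_le {i : ℕ} {f : Fin m → B} (h : m ≤ i) :
    SatFrom β G E i f ↔ IsHom G E f := by
  rw [SatFrom, dif_neg (Nat.not_lt.2 h)]
  rfl

theorem SatFrom.exists_satFrom_of_le (hβ : ∀ v, 1 ≤ β v) {i j : ℕ} {f : Fin m → B}
    (hs : SatFrom β G E i f) (hij : i ≤ j) (hjm : j ≤ m) :
    ∃ f' : Fin m → B, (∀ v : Fin m, (v : ℕ) < i → f' v = f v) ∧ SatFrom β G E j f' := by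
  induction j, hij using Nat.le_induction with
  | base => exact ⟨f, fun _ _ => rfl, hs⟩
  | succ j hij ih =>
    obtain ⟨f', hf', hs'⟩ := ih (by omega)
    obtain ⟨S, hS, hSsat⟩ := (satFrom_iff_of_lt (by omega)).1 hs'
    obtain ⟨b, hb⟩ := Finset.card_pos.1 (hS ▸ hβ _)
    refine ⟨_, fun v hv => ?_, hSsat b hb⟩
    rw [Function.update_of_ne (Fin.ne_of_val_ne (by simp only; omega)), hf' v hv]

theorem SatFrom.exists_isHom (hβ : ∀ v, 1 ≤ β v) {i : ℕ} {f : Fin m → B}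
    (hs : SatFrom β G E i f) (him : i ≤ m) :
    ∃ g, IsHom G E g ∧ ∀ v : Fin m, (v : ℕ) < i → g v = f v := by
  obtain ⟨g, hg, hsg⟩ := hs.exists_satFrom_of_le hβ him le_rfl
  exact ⟨g, (satFrom_iff_of_le le_rfl).1 hsg, hg⟩

theorem SatFrom.exists_choices_at (hβ : ∀ v, 1 ≤ β v) {i : ℕ} {f : Fin m → B}
    (hs : SatFrom β G E i f) {y : Fin m} (hiy : i ≤ y) :
    ∃ f' : Fin m → B, (∀ v : Fin m, (v : ℕ) < i → f' v = f v) ∧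
      ∃ S : Finset B, S.card = β y ∧
        ∀ b ∈ S, SatFrom β G E (y + 1) (Function.update f' y b) := by
  obtain ⟨f', hf', hs'⟩ := hs.exists_satFrom_of_le hβ hiy y.isLt.le
  exact ⟨f', hf', (satFrom_iff_of_lt y.isLt).1 hs'⟩

theorem SatFrom.exists_nested_choices (hβ : ∀ v, 1 ≤ β v) {i : ℕ} {f : Fin m → B}
    (hs : SatFrom β G E i f) {x y : Fin m} (hix : i ≤ x) (hxy : x < y) :
    ∃ a : Fin m → B, ∃ S : Finset B, S.card = β x ∧ ∀ b ∈ S,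
      ∃ T : Finset B, T.card = β y ∧ ∀ c ∈ T,
        ∃ g, IsHom G E g ∧ (∀ v < x, g v = a v) ∧ g x = b ∧ g y = c := by
  obtain ⟨a, -, S, hS, hSsat⟩ := hs.exists_choices_at hβ hix
  refine ⟨a, S, hS, fun b hb => ?_⟩
  obtain ⟨a', ha', T, hT, hTsat⟩ := (hSsat b hb).exists_choices_at hβ (Fin.lt_def.1 hxy)
  refine ⟨T, hT, fun c hc => ?_⟩
  obtain ⟨g, hg, hga⟩ := (hTsat c hc).exists_isHom hβ y.isLt
  have hga' : ∀ v : Fin m, (v : ℕ) ≤ x → g v = Function.update a x b v := fun v hv => by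
    rw [hga v (by omega), Function.update_of_ne (Fin.ne_of_val_ne (by omega)), ha' v (by omega)]
  refine ⟨g, hg, fun v hv => ?_, ?_, ?_⟩
  · rw [hga' v (Fin.lt_def.1 hv).le, Function.update_of_ne hv.ne]
  · rw [hga' x le_rfl, Function.update_self]
  · rw [hga y (by omega), Function.update_self]

theorem satFrom_of_forall_mem (A : Fin m → Finset B)
    (hA : ∀ u v, G.Adj u v → ∀ a ∈ A u, ∀ b ∈ A v, E a b)
    (i : ℕ) (f : Fin m → B) (hlow : ∀ v : Fin m, (v : ℕ) < i → f v ∈ A v)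
    (hhigh : ∀ v : Fin m, i ≤ (v : ℕ) → β v ≤ (A v).card) :
    SatFrom β G E i f := by
  by_cases him : i < m
  · obtain ⟨S, hSA, hS⟩ := Finset.exists_subset_card_eq (hhigh ⟨i, him⟩ le_rfl)
    refine (satFrom_iff_of_lt him).2 ⟨S, hS, fun b hb => ?_⟩
    refine satFrom_of_forall_mem A hA (i + 1) _ (fun v hv => ?_) (fun v hv => hhigh v (by omega))
    by_cases hvi : v = ⟨i, him⟩
    · subst hvi
      simpa using hSA hb
    · rw [Function.update_of_ne hvi]
      exact hlow v (by have := Fin.val_ne_of_ne hvi; simp only at this; omega)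
  · exact (satFrom_iff_of_le (by omega)).2 fun u v huv =>
      hA u v huv _ (hlow u (by omega)) _ (hlow v (by omega))
termination_by m - i

end Framework

section Parity

variable {m : ℕ} {B : Type*} {G : SimpleGraph (Fin m)} {E : B → B → Prop}

theorem IsHom.parity_eq {p : B → Bool} (hp : ∀ a b, E a b → p a ≠ p b)
    {c : Fin m → Bool} (hc : ∀ u v, G.Adj u v → c u ≠ c v) (hconn : G.Preconnected)
    {g g' : Fin m → B} (hg : IsHom G E g) (hg' : IsHom G E g') {w : Fin m} (hw : g w = g' w)
    (u : Fin m) : p (g u) = p (g' u) := by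
  have key : ∀ h : Fin m → B, IsHom G E h → ∀ {v v'} (_ : G.Walk v v'),
      xor (p (h v)) (c v) = xor (p (h v')) (c v') := by
    intro h hh v v' q
    induction q with
    | nil => rfl
    | cons hadj _ ih =>
      rw [← ih, Bool.eq_not.2 (hp _ _ (hh _ _ hadj)), Bool.eq_not.2 (hc _ _ hadj),
        Bool.not_xor_not]
  have := (key g hg (hconn w u).some).symm.trans (hw ▸ key g' hg' (hconn w u).some)
  simpa using this

end Parity

section PathFour

instance (n : ℕ) (i j : Fin n) : Decidable (pathAdj n i j) :=
  inferInstanceAs (Decidable (_ ∨ _))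

def pathFourOdd (a : Fin 4) : Bool := (a : ℕ) % 2 == 1

theorem pathFourOdd_ne_of_pathAdj :
    ∀ a b : Fin 4, pathAdj 4 a b → pathFourOdd a ≠ pathFourOdd b := by
  decide

-- Only the inner vertices `1` and `2` of `P_4` have two neighbours, and their parities differ.
theorem eq_of_pathFourOdd_eq_of_two_neighbours :
    ∀ b₁ b₂ : Fin 4, (∃ c₁ c₂, c₁ ≠ c₂ ∧ pathAdj 4 b₁ c₁ ∧ pathAdj 4 b₁ c₂) →
      (∃ c₁ c₂, c₁ ≠ c₂ ∧ pathAdj 4 b₂ c₁ ∧ pathAdj 4 b₂ c₂) →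
      pathFourOdd b₁ = pathFourOdd b₂ → b₁ = b₂ := by
  decide

def pathFourChoices (odd double : Bool) : Finset (Fin 4) :=
  if double then (if odd then {1, 3} else {0, 2}) else (if odd then {1} else {2})

theorem pathAdj_of_mem_pathFourChoices :
    ∀ o₁ o₂ d₁ d₂ : Bool, o₁ ≠ o₂ → (d₁ && d₂) = false →
      ∀ a ∈ pathFourChoices o₁ d₁, ∀ b ∈ pathFourChoices o₂ d₂, pathAdj 4 a b := by
  decide

theorem card_pathFourChoices (o d : Bool) :
    (pathFourChoices o d).card = if d then 2 else 1 := by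
  cases o <;> cases d <;> rfl

end PathFour

section Main

variable {m : ℕ} {β : Fin m → ℕ} {G : SimpleGraph (Fin m)}

theorem not_sat_pathFour_of_adj (hβ : ∀ v, 1 ≤ β v) (hconn : G.Connected) (hbip : Bipartite G)
    {f x y : Fin m} (hfx : f < x) (hxy : x < y) (hadj : G.Adj x y) (hx : β x = 2)
    (hy : β y = 2) : ¬ Sat β G (pathAdj 4) := by
  intro hsat
  obtain ⟨c, hc⟩ := hbip
  obtain ⟨a, S, hS, hbranch⟩ := (hsat fun _ => 0).exists_nested_choices hβ (Nat.zero_le _) hxy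
  obtain ⟨b₁, b₂, hb, rfl⟩ := Finset.card_eq_two.1 (hS.trans hx)
  have branch : ∀ b ∈ ({b₁, b₂} : Finset (Fin 4)),
      (∃ c₁ c₂, c₁ ≠ c₂ ∧ pathAdj 4 b c₁ ∧ pathAdj 4 b c₂) ∧
        ∃ g, IsHom G (pathAdj 4) g ∧ g f = a f ∧ g x = b := by
    intro b hb
    obtain ⟨T, hT, hTg⟩ := hbranch b hb
    obtain ⟨c₁, c₂, hc₁₂, rfl⟩ := Finset.card_eq_two.1 (hT.trans hy)
    have nbr : ∀ c ∈ ({c₁, c₂} : Finset (Fin 4)), pathAdj 4 b c := fun c hc' => by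
      obtain ⟨g, hg, -, hgx, hgy⟩ := hTg c hc'
      rw [← hgx, ← hgy]
      exact hg x y hadj
    obtain ⟨g, hg, hga, hgx, -⟩ := hTg c₁ (by simp)
    exact ⟨⟨c₁, c₂, hc₁₂, nbr c₁ (by simp), nbr c₂ (by simp)⟩, g, hg, hga f hfx, hgx⟩
  obtain ⟨h₁, g₁, hg₁, hg₁f, rfl⟩ := branch b₁ (by simp)
  obtain ⟨h₂, g₂, hg₂, hg₂f, rfl⟩ := branch b₂ (by simp)
  exact hb (eq_of_pathFourOdd_eq_of_two_neighbours _ _ h₁ h₂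
    (hg₁.parity_eq pathFourOdd_ne_of_pathAdj hc hconn.preconnected hg₂ (hg₁f.trans hg₂f.symm) x))

theorem sat_pathFour_of_forall_adj (hβ : ∀ v, β v ≤ 2) (hbip : Bipartite G) {f : Fin m}
    (hf : ∀ v, f ≤ v) (hno : ∀ x y, G.Adj x y → β x = 2 → β y = 2 → x = f ∨ y = f) :
    Sat β G (pathAdj 4) := by
  obtain ⟨c, hc⟩ := hbip
  intro f₀
  have hf₀ : f = ⟨0, f.pos⟩ := Fin.ext (Nat.le_zero.1 (hf ⟨0, f.pos⟩))
  obtain ⟨S, hS12, hS⟩ := Finset.exists_subset_card_eq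
    (s := ({1, 2} : Finset (Fin 4))) (hβ ⟨0, f.pos⟩)
  refine (satFrom_iff_of_lt f.pos).2 ⟨S, hS, fun b hb => ?_⟩
  refine satFrom_of_forall_mem
    (fun v => pathFourChoices (xor (c v != c f) (pathFourOdd b)) (β v == 2 && v != f))
    (fun u v huv => pathAdj_of_mem_pathFourChoices _ _ _ _ ?_ ?_) 1 _ (fun v hv => ?_)
    (fun v hv => ?_)
  · have := hc u v huv
    revert this
    cases c u <;> cases c v <;> cases c f <;> cases pathFourOdd b <;> decide
  · rcases eq_or_ne (β u) 2 with hu | hu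
    · rcases eq_or_ne (β v) 2 with hv | hv
      · rcases hno u v huv hu hv with rfl | rfl <;> simp
      · simp [hv]
    · simp [hu]
  · have hvf : v = f := hf₀ ▸ Fin.ext (by simp only; omega)
    subst hvf
    rw [hf₀, Function.update_self, ← hf₀]
    have : b = 1 ∨ b = 2 := by simpa using hS12 hb
    rcases this with rfl | rfl <;> simp [pathFourChoices, pathFourOdd]
  · have hvf : v ≠ f := fun h => by rw [h, hf₀] at hv; simp at hv
    rw [card_pathFourChoices]
    split_ifs with h
    · exact hβ v
    · have := hβ v
      simp only [Bool.and_eq_true, beq_iff_eq, bne_iff_ne, ne_eq, hvf, not_false_eq_true,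
        and_true] at h
      omega

end Main

/-- Let `Ψ` have connected bipartite constraint graph `G`, `P_∞ ⊨ Ψ`, and
let `f` be the `≺`-least variable.  Then `P_4 ⊨ Ψ` iff the `∃^{≥2}` vertices of `G` are
pairwise non-adjacent except possibly for edges incident to `f`. -/
theorem p4_sat_iff {m : ℕ} (β : Fin m → ℕ) (hβ : ∀ v, β v = 1 ∨ β v = 2)
    (G : SimpleGraph (Fin m)) (hconn : G.Connected) (hbip : Bipartite G)
    (hinf : Sat β G intPathAdj) (f : Fin m) (hf : ∀ v, f ≤ v) :
    Sat β G (pathAdj 4) ↔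
      ¬ ∃ x y : Fin m, G.Adj x y ∧ β x = 2 ∧ β y = 2 ∧ x ≠ f ∧ y ≠ f := by
  constructor
  · rintro hsat ⟨x, y, hadj, hx, hy, hxf, hyf⟩
    have hβ₁ : ∀ v, 1 ≤ β v := fun v => by rcases hβ v with h | h <;> omega
    rcases lt_or_gt_of_ne hadj.ne with hxy | hyx
    · exact not_sat_pathFour_of_adj hβ₁ hconn hbip ((hf x).lt_of_ne hxf.symm) hxy hadj hx hy hsat
    · exact not_sat_pathFour_of_adj hβ₁ hconn hbip ((hf y).lt_of_ne hyf.symm) hyx hadj.symm hy hx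
        hsat
  · intro hno
    refine sat_pathFour_of_forall_adj (fun v => by rcases hβ v with h | h <;> omega) hbip hf ?_
    intro x y hadj hx hy
    by_contra! h
    exact hno ⟨x, y, hadj, hx, hy, h⟩

end CountingCSP
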